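/- Let (Ω, d) be a metric space and X ∈ L²(Ω) a random variable whose Fréchet mean μ_X exists, is unique, and is well separated (for every ε > 0, inf over {ω : d(ω, μ_X) > ε} of F_X(ω) is strictly larger than F_X(μ_X)). Let μ ∈ Ω and let g be a μ-admissible randomization independent of X, and set X* = g·X. Then Var(X*) ≥ Var(X), with equality if and only if μ_X = μ. -/

import Mathlib

open MeasureTheory

/-- `μ` is a Fréchet mean of `X`: it minimizes `ω ↦ E[d(X, ω)²]`. -/
def IsFrechetMean {Ω : Type*} [MetricSpace Ω] {Ω₀ : Type*} [MeasurableSpace Ω₀]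
    (P : Measure Ω₀) (X : Ω₀ → Ω) (μ : Ω) : Prop :=
  ∀ ω : Ω, ∫ a, dist (X a) μ ^ 2 ∂P ≤ ∫ a, dist (X a) ω ^ 2 ∂P

/-- for a `μ`-admissible randomization `g` (independent of `X`, modelled on
a product space), the Fréchet variance satisfies `Var(X*) ≥ Var(X)` with equality iff
the (unique, well-separated) Fréchet mean `μ_X` of `X` equals `μ`. -/
theorem admissible_randomization_variance
    {Ω : Type*} [MetricSpace Ω] [MeasurableSpace Ω] [BorelSpace Ω]
    {Ω₀ : Type*} [MeasurableSpace Ω₀] (P : Measure Ω₀) [IsProbabilityMeasure P]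
    {Θ : Type*} [MeasurableSpace Θ] (Q : Measure Θ) [IsProbabilityMeasure Q]
    (X : Ω₀ → Ω) (hX : Measurable X)
    (hL2 : ∀ ω : Ω, Integrable (fun a => dist (X a) ω ^ 2) P)
    -- unique, well-separated Fréchet mean of X
    (μX : Ω) (hμX : IsFrechetMean P X μX)
    (huniq : ∀ m : Ω, IsFrechetMean P X m → m = μX)
    (hwellsep : ∀ ε > (0 : ℝ), ∃ c : ℝ, (∫ a, dist (X a) μX ^ 2 ∂P) < c ∧
      ∀ ω : Ω, ε < dist ω μX → c ≤ ∫ a, dist (X a) ω ^ 2 ∂P)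
    -- the randomization g and its admissibility for μ
    (μ : Ω) (g : Θ → (Ω ≃ᵢ Ω))
    (H : Subgroup (Ω ≃ᵢ Ω)) (hHμ : ∀ h ∈ H, h μ = μ) (hsupp : ∀ t, g t ∈ H)
    (hadm : ∀ x : Ω, x ≠ μ → ¬ ∃ c : Ω, ∀ᵐ t ∂Q, g t x = c)
    (hmeas : Measurable fun p : Ω₀ × Θ => g p.2 (X p.1))
    -- X* = g·X and its Fréchet mean μ*
    (μstar : Ω) (hμstar : IsFrechetMean (P.prod Q) (fun p : Ω₀ × Θ => g p.2 (X p.1)) μstar) :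
    (∫ a, dist (X a) μX ^ 2 ∂P)
        ≤ ∫ p : Ω₀ × Θ, dist (g p.2 (X p.1)) μstar ^ 2 ∂(P.prod Q)
      ∧ ((∫ p : Ω₀ × Θ, dist (g p.2 (X p.1)) μstar ^ 2 ∂(P.prod Q))
            = ∫ a, dist (X a) μX ^ 2 ∂P ↔ μX = μ) := by
  classical
  set V := ∫ a, dist (X a) μX ^ 2 ∂P with hV
  set f : Ω₀ × Θ → ℝ := fun p => dist (g p.2 (X p.1)) μstar ^ 2 with hfdef
  have hgμ : ∀ t, g t μ = μ := fun t => hHμ _ (hsupp t)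
  -- pointwise isometry identity
  have key : ∀ (t : Θ) (x : Ω), dist (g t x) μstar = dist x ((g t).symm μstar) := by
    intro t x
    conv_lhs => rw [← (g t).apply_symm_apply μstar, (g t).dist_eq]
  have keyμ : ∀ t : Θ, dist μ ((g t).symm μstar) = dist μ μstar := by
    intro t
    rw [← (g t).dist_eq μ ((g t).symm μstar), (g t).apply_symm_apply, hgμ]
  -- integrability of f on the product
  have hfmeas : Measurable f :=
    (((continuous_id.dist continuous_const).measurable.comp hmeas).pow_const 2)
  have hdom : Integrable (fun p : Ω₀ × Θ =>
      2 * dist (X p.1) μ ^ 2 + 2 * dist μ μstar ^ 2) (P.prod Q) := by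
    have h1 : Integrable (fun p : Ω₀ × Θ =>
        dist (X p.1) μ ^ 2 * (fun _ : Θ => (1 : ℝ)) p.2) (P.prod Q) :=
      (hL2 μ).mul_prod (integrable_const 1)
    simp only [mul_one] at h1
    exact (h1.const_mul 2).add (integrable_const _)
  have hfint : Integrable f (P.prod Q) := by
    refine hdom.mono hfmeas.aestronglyMeasurable (Filter.Eventually.of_forall fun p => ?_)
    have h1 : dist (g p.2 (X p.1)) μstar ≤ dist (X p.1) μ + dist μ μstar := by
      rw [key]
      calc dist (X p.1) ((g p.2).symm μstar)
          ≤ dist (X p.1) μ + dist μ ((g p.2).symm μstar) := dist_triangle _ _ _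
        _ = dist (X p.1) μ + dist μ μstar := by rw [keyμ]
    have h0 : (0 : ℝ) ≤ dist (g p.2 (X p.1)) μstar := dist_nonneg
    have h0' : (0 : ℝ) ≤ dist (X p.1) μ := dist_nonneg
    have h0'' : (0 : ℝ) ≤ dist μ μstar := dist_nonneg
    simp only [hfdef, Real.norm_eq_abs]
    rw [abs_of_nonneg (by positivity), abs_of_nonneg (by positivity)]
    have h4 : dist (g p.2 (X p.1)) μstar ^ 2 ≤ (dist (X p.1) μ + dist μ μstar) ^ 2 :=
      pow_le_pow_left₀ h0 h1 2
    nlinarith [sq_nonneg (dist (X p.1) μ - dist μ μstar)]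
  -- inner integral over P for fixed t
  have hφ_eq : ∀ t : Θ,
      (∫ a, f (a, t) ∂P) = ∫ a, dist (X a) ((g t).symm μstar) ^ 2 ∂P := by
    intro t
    simp only [hfdef, key]
  have hφ_ge : ∀ t : Θ, V ≤ ∫ a, f (a, t) ∂P := fun t => by
    rw [hφ_eq]; exact hμX _
  have hφ_int : Integrable (fun t => ∫ a, f (a, t) ∂P) Q :=
    hfint.integral_prod_right
  have hFub : ∫ p, f p ∂(P.prod Q) = ∫ t, ∫ a, f (a, t) ∂P ∂Q :=
    integral_prod_symm f hfint
  have hineq : V ≤ ∫ p, f p ∂(P.prod Q) := by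
    rw [hFub]
    calc V = ∫ _t, V ∂Q := by simp
      _ ≤ _ := integral_mono (integrable_const V) hφ_int hφ_ge
  refine ⟨hineq, ?_, ?_⟩
  · -- equality → μX = μ
    intro hE
    by_contra hne
    have hzero : ∫ t, ((∫ a, f (a, t) ∂P) - V) ∂Q = 0 := by
      rw [integral_sub hφ_int (integrable_const V), integral_const]
      simp only [probReal_univ, one_smul]
      rw [← hFub, hE]
      ring
    have hae : (fun t => (∫ a, f (a, t) ∂P) - V) =ᵐ[Q] 0 := by
      refine (integral_eq_zero_iff_of_nonneg_ae ?_ (hφ_int.sub (integrable_const V))).1 hzero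
      exact Filter.Eventually.of_forall fun t => sub_nonneg.2 (hφ_ge t)
    have hconst : ∀ᵐ t ∂Q, g t μX = μstar := by
      filter_upwards [hae] with t ht
      have hφV : (∫ a, f (a, t) ∂P) = V := by
        have := ht
        simp only [Pi.zero_apply, sub_eq_zero] at this
        exact this
      have hFM : IsFrechetMean P X ((g t).symm μstar) := by
        intro ω
        calc ∫ a, dist (X a) ((g t).symm μstar) ^ 2 ∂P
            = V := by rw [← hφ_eq, hφV]
          _ ≤ ∫ a, dist (X a) ω ^ 2 ∂P := hμX ω
      have h3 : (g t).symm μstar = μX := huniq _ hFM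
      have h4 := congrArg (g t) h3
      rw [(g t).apply_symm_apply] at h4
      exact h4.symm
    exact hadm μX hne ⟨μstar, hconst⟩
  · -- μX = μ → equality
    intro hEq
    subst hEq
    refine le_antisymm ?_ hineq
    have h2 : ∀ (t : Θ) (x : Ω), dist (g t x) μX = dist x μX := by
      intro t x
      conv_lhs => rw [← hgμ t]
      exact (g t).dist_eq x μX
    have hint2 : Integrable (fun p : Ω₀ × Θ => dist (X p.1) μX ^ 2) (P.prod Q) := by
      have h1 : Integrable (fun p : Ω₀ × Θ =>
          dist (X p.1) μX ^ 2 * (fun _ : Θ => (1 : ℝ)) p.2) (P.prod Q) :=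
        (hL2 μX).mul_prod (integrable_const 1)
      simpa only [mul_one] using h1
    have hcomp : ∫ p : Ω₀ × Θ, dist (g p.2 (X p.1)) μX ^ 2 ∂(P.prod Q) = V := by
      have e1 : ∫ p : Ω₀ × Θ, dist (g p.2 (X p.1)) μX ^ 2 ∂(P.prod Q)
          = ∫ p : Ω₀ × Θ, dist (X p.1) μX ^ 2 ∂(P.prod Q) := by
        apply integral_congr_ae
        exact Filter.Eventually.of_forall fun p => by dsimp only; rw [h2]
      rw [e1, integral_prod_symm _ hint2]
      simp [hV]
    calc ∫ p, f p ∂(P.prod Q)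
        ≤ ∫ p : Ω₀ × Θ, dist (g p.2 (X p.1)) μX ^ 2 ∂(P.prod Q) := hμstar μX
      _ = V := hcomp
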